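/- arXiv:1602.00349 — 2 statements merged into one kernel-verified Lean document; each statement's English description precedes it below -/
import Mathlib

section
/- Sufficient condition for full column rank (singular value condition): Let A_c, Δ ∈ ℝ^{m×n} with Δ ≥ 0 entrywise. If the largest singular value of Δ is strictly less than the smallest singular value of A_c — equivalently, if there exists c ≥ 0 such that ‖Δ x‖₂ ≤ c‖x‖₂ for all x ∈ ℝ^n and ‖A_c x‖₂ > c‖x‖₂ for all nonzero x ∈ ℝ^n — then every real matrix A with |A − A_c| ≤ Δ entrywise has full column rank n. -/
/-- The Euclidean norm on `Fin n → ℝ`. -/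
noncomputable def euclNorm {n : ℕ} (x : Fin n → ℝ) : ℝ :=
  Real.sqrt (∑ i, x i ^ 2)

lemma euclNorm_mono {n : ℕ} (u v : Fin n → ℝ) (h : ∀ i, |u i| ≤ v i) :
    euclNorm u ≤ euclNorm v := by
  apply Real.sqrt_le_sqrt
  apply Finset.sum_le_sum
  intro i _
  have := h i
  calc u i ^ 2 = |u i| ^ 2 := (sq_abs _).symm
    _ ≤ v i ^ 2 := by
        apply pow_le_pow_left₀ (abs_nonneg _) this

/-- Sufficient condition for full column rank: if the largest singular value of
`Δ` is strictly less than the smallest singular value of `A_c` (formulated: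
there is `c ≥ 0` with `‖Δ x‖₂ ≤ c ‖x‖₂` for all `x` and `‖A_c x‖₂ > c ‖x‖₂` for
nonzero `x`), then every matrix in `[A_c - Δ, A_c + Δ]` has full column rank. -/
theorem fullColumnRank_of_singular_values {m n : ℕ}
    (Ac Δ : Matrix (Fin m) (Fin n) ℝ)
    (hΔ : ∀ i j, 0 ≤ Δ i j)
    (h : ∃ c : ℝ, 0 ≤ c ∧ (∀ x : Fin n → ℝ, euclNorm (Δ.mulVec x) ≤ c * euclNorm x) ∧
      (∀ x : Fin n → ℝ, x ≠ 0 → c * euclNorm x < euclNorm (Ac.mulVec x))) :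
    ∀ A : Matrix (Fin m) (Fin n) ℝ, (∀ i j, |A i j - Ac i j| ≤ Δ i j) →
      ∀ x : Fin n → ℝ, A.mulVec x = 0 → x = 0 := by
  obtain ⟨c, hc0, hΔnorm, hAc⟩ := h
  intro A hA x hx
  by_contra hxne
  set x' : Fin n → ℝ := fun j => |x j| with hx'
  -- |((Ac - A).mulVec x) i| ≤ (Δ.mulVec x') i
  have key : ∀ i, |((Ac - A).mulVec x) i| ≤ (Δ.mulVec x') i := by
    intro i
    simp only [Matrix.mulVec, dotProduct]
    calc |∑ j, (Ac - A) i j * x j| ≤ ∑ j, |(Ac - A) i j * x j| :=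
          Finset.abs_sum_le_sum_abs _ _
      _ ≤ ∑ j, Δ i j * x' j := by
          apply Finset.sum_le_sum
          intro j _
          rw [abs_mul]
          apply mul_le_mul_of_nonneg_right _ (abs_nonneg _)
          have := hA i j
          simpa [Matrix.sub_apply, abs_sub_comm] using this
  have hAceq : Ac.mulVec x = (Ac - A).mulVec x := by
    rw [Matrix.sub_mulVec, hx, sub_zero]
  have hnorm_x' : euclNorm x' = euclNorm x := by
    unfold euclNorm
    congr 1
    apply Finset.sum_congr rfl
    intro i _
    simp [hx', sq_abs]
  have h1 : euclNorm (Ac.mulVec x) ≤ euclNorm (Δ.mulVec x') := by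
    rw [hAceq]
    exact euclNorm_mono _ _ key
  have h2 : euclNorm (Δ.mulVec x') ≤ c * euclNorm x' := hΔnorm x'
  have h3 : c * euclNorm x < euclNorm (Ac.mulVec x) := hAc x hxne
  rw [hnorm_x'] at h2
  linarith
end

section
/- Largest eigenvalue of a symmetric interval matrix with essentially nonnegative midpoint: Let A_c, Δ ∈ ℝ^{n×n} be symmetric with Δ ≥ 0 entrywise, and suppose A_c is essentially nonnegative, i.e., (A_c)_{ij} ≥ 0 for all i ≠ j. Then the maximum, over all symmetric real matrices A with |A − A_c| ≤ Δ entrywise, of the largest eigenvalue λ_max(A), equals λ_max(A_c + Δ), the largest eigenvalue of the upper bound matrix A_c + Δ. -/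
/-!
If `u` is a unit eigenvector of `A` for the eigenvalue `λ`, then
`λ = uᵀ A u ≤ |u|ᵀ (A_c + Δ) |u| ≤ λ_max(A_c + Δ)`: the middle inequality is termwise, since off
the diagonal `|A i j| ≤ A_c i j + Δ i j` because `A_c i j ≥ 0`, and the last one is the Rayleigh
bound. The maximum is attained, because `A_c + Δ` itself lies in the interval matrix.
-/

open Unitary
open scoped ComplexOrder

variable {ι : Type*} [Fintype ι]

theorem dotProduct_abs_self (x : ι → ℝ) : |x| ⬝ᵥ |x| = x ⬝ᵥ x := by
  simp [dotProduct, abs_mul_abs_self]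

namespace Matrix

theorem dotProduct_mulVec_le_abs {A B : Matrix ι ι ℝ} (hdiag : ∀ i, A i i ≤ B i i)
    (hoff : ∀ i j, i ≠ j → |A i j| ≤ B i j) (x : ι → ℝ) :
    x ⬝ᵥ A *ᵥ x ≤ |x| ⬝ᵥ B *ᵥ |x| := by
  simp only [dotProduct, mulVec, Finset.mul_sum, Pi.abs_apply]
  refine Finset.sum_le_sum fun i _ => Finset.sum_le_sum fun j _ => ?_
  rcases eq_or_ne i j with rfl | hij
  · calc x i * (A i i * x i) = A i i * (x i * x i) := by ring
      _ ≤ B i i * (x i * x i) := by gcongr; exacts [mul_self_nonneg _, hdiag i]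
      _ = |x i| * (B i i * |x i|) := by rw [← abs_mul_abs_self (x i)]; ring
  · calc x i * (A i j * x j) ≤ |x i * (A i j * x j)| := le_abs_self _
      _ = |x i| * (|A i j| * |x j|) := by simp only [abs_mul]
      _ ≤ |x i| * (B i j * |x j|) := by gcongr; exact hoff i j hij

namespace IsHermitian

variable [DecidableEq ι]

theorem posSemidef_smul_one_sub {𝕜 : Type*} [RCLike 𝕜] {B : Matrix ι ι 𝕜}
    (hB : B.IsHermitian) {c : ℝ} (hc : ∀ i, hB.eigenvalues i ≤ c) :
    ((c : 𝕜) • 1 - B).PosSemidef := by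
  have hdiag : (c : 𝕜) • 1 - B = conjStarAlgAut 𝕜 _ hB.eigenvectorUnitary
      (diagonal fun i => (c : 𝕜) - hB.eigenvalues i) := by
    conv_lhs => rw [hB.spectral_theorem, ← map_one (conjStarAlgAut 𝕜 _ hB.eigenvectorUnitary),
      ← map_smul, ← map_sub, smul_one_eq_diagonal, diagonal_sub]
    rfl
  rw [hdiag, conjStarAlgAut_apply, IsUnit.posSemidef_star_right_conjugate_iff isUnit_coe,
    posSemidef_diagonal_iff]
  exact fun i => sub_nonneg.mpr (RCLike.ofReal_le_ofReal.mpr (hc i))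

theorem dotProduct_mulVec_le_iSup_eigenvalues_mul {B : Matrix ι ι ℝ} (hB : B.IsHermitian)
    (x : ι → ℝ) : x ⬝ᵥ B *ᵥ x ≤ (⨆ k, hB.eigenvalues k) * (x ⬝ᵥ x) := by
  cases isEmpty_or_nonempty ι
  · simp
  have hpsd := hB.posSemidef_smul_one_sub fun i => le_ciSup (Set.finite_range _).bddAbove i
  simpa [sub_mulVec, smul_mulVec, dotProduct_smul] using hpsd.dotProduct_mulVec_nonneg x

theorem dotProduct_self_eigenvectorBasis {A : Matrix ι ι ℝ} (hA : A.IsHermitian) (k : ι) :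
    ⇑(hA.eigenvectorBasis k) ⬝ᵥ ⇑(hA.eigenvectorBasis k) = 1 := by
  have hinner : inner ℝ (hA.eigenvectorBasis k) (hA.eigenvectorBasis k) = 1 := by
    rw [real_inner_self_eq_norm_sq, hA.eigenvectorBasis.orthonormal.1 k, one_pow]
  rwa [EuclideanSpace.inner_eq_star_dotProduct, star_trivial] at hinner

theorem eigenvalues_eq_dotProduct_mulVec {A : Matrix ι ι ℝ} (hA : A.IsHermitian) (k : ι) :
    hA.eigenvalues k = ⇑(hA.eigenvectorBasis k) ⬝ᵥ A *ᵥ ⇑(hA.eigenvectorBasis k) := by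
  simpa using hA.eigenvalues_eq k

theorem iSup_eigenvalues_le_of_abs_le {A B : Matrix ι ι ℝ} (hA : A.IsHermitian)
    (hB : B.IsHermitian) (hdiag : ∀ i, A i i ≤ B i i) (hoff : ∀ i j, i ≠ j → |A i j| ≤ B i j) :
    ⨆ k, hA.eigenvalues k ≤ ⨆ k, hB.eigenvalues k := by
  cases isEmpty_or_nonempty ι
  · simp
  refine ciSup_le fun k => ?_
  set u := ⇑(hA.eigenvectorBasis k)
  calc hA.eigenvalues k = u ⬝ᵥ A *ᵥ u := hA.eigenvalues_eq_dotProduct_mulVec k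
    _ ≤ |u| ⬝ᵥ B *ᵥ |u| := dotProduct_mulVec_le_abs hdiag hoff u
    _ ≤ (⨆ k, hB.eigenvalues k) * (|u| ⬝ᵥ |u|) := hB.dotProduct_mulVec_le_iSup_eigenvalues_mul _
    _ = ⨆ k, hB.eigenvalues k := by
      rw [dotProduct_abs_self, hA.dotProduct_self_eigenvectorBasis, mul_one]

end IsHermitian

end Matrix

/-- Largest eigenvalue of a symmetric interval matrix with essentially
nonnegative midpoint: if `(A_c)_{ij} ≥ 0` for all `i ≠ j`, then the maximum of
`λ_max(A)` over all symmetric `A` with `|A - A_c| ≤ Δ` entrywise equals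
`λ_max(A_c + Δ)`. -/
theorem lambdaMax_essentially_nonneg {n : ℕ} (Ac Δ : Matrix (Fin n) (Fin n) ℝ)
    (hAc : Ac.IsHermitian) (hΔsym : Δ.IsHermitian) (hΔ : ∀ i j, 0 ≤ Δ i j)
    (hEss : ∀ i j, i ≠ j → 0 ≤ Ac i j) :
    sSup {v : ℝ | ∃ (A : Matrix (Fin n) (Fin n) ℝ) (hA : A.IsHermitian),
        (∀ i j, |A i j - Ac i j| ≤ Δ i j) ∧ v = ⨆ k, hA.eigenvalues k} =
      ⨆ k, (hAc.add hΔsym).eigenvalues k := by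
  refine IsGreatest.csSup_eq ⟨⟨Ac + Δ, hAc.add hΔsym, fun i j => ?_, rfl⟩, ?_⟩
  · simp [abs_of_nonneg (hΔ i j)]
  rintro v ⟨A, hA, hbound, rfl⟩
  refine hA.iSup_eigenvalues_le_of_abs_le _ (fun i => ?_) (fun i j hij => ?_)
  · linarith [(abs_le.mp (hbound i i)).2, Matrix.add_apply Ac Δ i i]
  · have := abs_le.mp (hbound i j)
    rw [Matrix.add_apply, abs_le]
    constructor <;> linarith [hEss i j hij]
end
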